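/- Let n ≥ 4 and let G be a finite simple graph that is independence equivalent to the cycle C_n. Then ∑_{v ∈ V(G)} C(deg(v), 2) = n + t(G), where t(G) is the number of triangles in G. -/

import Mathlib

open SimpleGraph Polynomial Finset

/-- The number of independent sets of size `k` in the graph `G`. -/
noncomputable def indepCount {V : Type*} [Fintype V] (G : SimpleGraph V) (k : ℕ) : ℕ :=
  Nat.card {s : Finset V // s.card = k ∧ ∀ u ∈ s, ∀ v ∈ s, ¬ G.Adj u v}

/-- The graph `D_n`: a triangle on the vertices `0, 1, 2` together with the
pendant path `2 - 3 - ⋯ - (n-1)`. -/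
def dGraph (n : ℕ) : SimpleGraph (Fin n) :=
  SimpleGraph.fromRel (fun u v =>
    (u.val = 0 ∧ v.val = 1) ∨ (u.val = 0 ∧ v.val = 2) ∨ (u.val = 1 ∧ v.val = 2) ∨
    (2 ≤ u.val ∧ v.val = u.val + 1))

/-- The number of triangles (sets of three pairwise adjacent vertices) in `G`. -/
noncomputable def triangleCount {V : Type*} [Fintype V] (G : SimpleGraph V) : ℕ :=
  Nat.card {s : Finset V // s.card = 3 ∧ ∀ u ∈ s, ∀ v ∈ s, u ≠ v → G.Adj u v}

section Aux
variable {V : Type*} [Fintype V] [DecidableEq V]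


lemma indepCount_eq (H : SimpleGraph V) [DecidableRel H.Adj] (k : ℕ) :
    indepCount H k =
      (((univ : Finset V).powersetCard k).filter
        (fun s => ∀ u ∈ s, ∀ v ∈ s, ¬ H.Adj u v)).card := by
  rw [indepCount, Nat.card_eq_fintype_card, Fintype.card_subtype]
  congr 1
  ext s
  simp [Finset.mem_powersetCard, and_comm]

lemma triangleCount_eq (H : SimpleGraph V) [DecidableRel H.Adj] :
    triangleCount H =
      (((univ : Finset V).powersetCard 3).filter
        (fun s => ∀ u ∈ s, ∀ v ∈ s, u ≠ v → H.Adj u v)).card := by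
  rw [triangleCount, Nat.card_eq_fintype_card, Fintype.card_subtype]
  congr 1
  ext s
  simp [Finset.mem_powersetCard, and_comm]

lemma indepCount_one (H : SimpleGraph V) [DecidableRel H.Adj] :
    indepCount H 1 = Fintype.card V := by
  rw [indepCount_eq, Finset.filter_true_of_mem, Finset.card_powersetCard]
  · simp
  · intro s hs
    rw [Finset.mem_powersetCard] at hs
    obtain ⟨a, rfl⟩ := Finset.card_eq_one.mp hs.2
    intro u hu v hv
    simp only [Finset.mem_singleton] at hu hv
    subst hu; subst hv
    exact H.irrefl
variable {V : Type*} [Fintype V] [DecidableEq V]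

/-- number of supersets of a 2-set among 3-sets -/
lemma card_supersets (p : Finset V) (hp : p.card = 2) :
    (((univ : Finset V).powersetCard 3).filter (fun s => p ⊆ s)).card
      = Fintype.card V - 2 := by
  rw [← Finset.card_bij (fun (v : V) (_ : v ∈ univ \ p) => insert v p)]
  · rw [Finset.card_sdiff_of_subset (Finset.subset_univ p), hp, Finset.card_univ]
  · intro v hv
    simp only [Finset.mem_sdiff, Finset.mem_univ, true_and] at hv
    simp only [Finset.mem_filter, Finset.mem_powersetCard]
    exact ⟨⟨Finset.subset_univ _, by rw [Finset.card_insert_of_notMem hv, hp]⟩,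
      Finset.subset_insert _ _⟩
  · intro v hv w hw hvw
    simp only [Finset.mem_sdiff, Finset.mem_univ, true_and] at hv hw
    have : v ∈ insert w p := hvw ▸ Finset.mem_insert_self v p
    rcases Finset.mem_insert.mp this with h | h
    · exact h
    · exact absurd h hv
  · intro s hs
    simp only [Finset.mem_filter, Finset.mem_powersetCard] at hs
    obtain ⟨⟨-, hcard⟩, hsub⟩ := hs
    have h1 : (s \ p).card = 1 := by
      rw [Finset.card_sdiff_of_subset hsub, hcard, hp]
    obtain ⟨v, hv⟩ := Finset.card_eq_one.mp h1
    have hvm : v ∈ s \ p := hv ▸ Finset.mem_singleton_self v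
    rw [Finset.mem_sdiff] at hvm
    refine ⟨v, by simp [hvm.2], ?_⟩
    apply Finset.Subset.antisymm
    · intro x hx
      rcases Finset.mem_insert.mp hx with rfl | hx
      · exact hvm.1
      · exact hsub hx
    · intro x hx
      by_cases hxp : x ∈ p
      · exact Finset.mem_insert_of_mem hxp
      · have : x ∈ s \ p := Finset.mem_sdiff.mpr ⟨hx, hxp⟩
        rw [hv, Finset.mem_singleton] at this
        simp [this]

lemma exchange1 (Q : Finset V → Prop) [DecidablePred Q] :
    ∑ s ∈ (univ : Finset V).powersetCard 3,
        (((univ : Finset V).powersetCard 2).filter (fun p => p ⊆ s ∧ Q p)).card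
      = (((univ : Finset V).powersetCard 2).filter Q).card * (Fintype.card V - 2) := by
  calc ∑ s ∈ (univ : Finset V).powersetCard 3,
        (((univ : Finset V).powersetCard 2).filter (fun p => p ⊆ s ∧ Q p)).card
      = ∑ s ∈ (univ : Finset V).powersetCard 3, ∑ p ∈ (univ : Finset V).powersetCard 2,
          (if p ⊆ s ∧ Q p then (1:ℕ) else 0) :=
        Finset.sum_congr rfl fun s _ => Finset.card_filter _ _
    _ = ∑ p ∈ (univ : Finset V).powersetCard 2, ∑ s ∈ (univ : Finset V).powersetCard 3,
          (if p ⊆ s ∧ Q p then (1:ℕ) else 0) := Finset.sum_comm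
    _ = ∑ p ∈ (univ : Finset V).powersetCard 2,
          (if Q p then (1:ℕ) else 0) * (Fintype.card V - 2) := by
        refine Finset.sum_congr rfl (fun p hp => ?_)
        rw [Finset.mem_powersetCard] at hp
        by_cases hQ : Q p
        · simp only [hQ, and_true, if_true, one_mul]
          rw [← Finset.card_filter, card_supersets p hp.2]
        · simp [hQ]
    _ = (((univ : Finset V).powersetCard 2).filter Q).card * (Fintype.card V - 2) := by
        rw [← Finset.sum_mul, ← Finset.card_filter]

lemma exchange2 (H : SimpleGraph V) [DecidableRel H.Adj] :
    ∑ s ∈ (univ : Finset V).powersetCard 3,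
        (s.filter (fun v => ∀ u ∈ s, u ≠ v → H.Adj v u)).card
      = ∑ v : V, (H.degree v).choose 2 := by
  calc ∑ s ∈ (univ : Finset V).powersetCard 3,
        (s.filter (fun v => ∀ u ∈ s, u ≠ v → H.Adj v u)).card
      = ∑ s ∈ (univ : Finset V).powersetCard 3, ∑ v ∈ (univ : Finset V),
          (if v ∈ s ∧ ∀ u ∈ s, u ≠ v → H.Adj v u then (1:ℕ) else 0) := by
        refine Finset.sum_congr rfl fun s _ => ?_
        rw [← Finset.card_filter]
        congr 1
        ext v
        simp only [Finset.mem_filter, Finset.mem_univ, true_and]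
    _ = ∑ v ∈ (univ : Finset V), ∑ s ∈ (univ : Finset V).powersetCard 3,
          (if v ∈ s ∧ ∀ u ∈ s, u ≠ v → H.Adj v u then (1:ℕ) else 0) := Finset.sum_comm
    _ = ∑ v : V, (H.degree v).choose 2 := by
        refine Finset.sum_congr rfl fun v _ => ?_
        rw [← Finset.card_filter]
        rw [show (((univ : Finset V).powersetCard 3).filter
              (fun s => v ∈ s ∧ ∀ u ∈ s, u ≠ v → H.Adj v u)).card
            = ((H.neighborFinset v).powersetCard 2).card from ?_]
        · rw [Finset.card_powersetCard, SimpleGraph.card_neighborFinset_eq_degree]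
        · apply Finset.card_bij (fun s _ => s.erase v)
          · intro s hs
            simp only [Finset.mem_filter, Finset.mem_powersetCard] at hs
            obtain ⟨⟨-, hcard⟩, hv, hadj⟩ := hs
            rw [Finset.mem_powersetCard]
            constructor
            · intro u hu
              rw [Finset.mem_erase] at hu
              rw [SimpleGraph.mem_neighborFinset]
              exact hadj u hu.2 hu.1
            · rw [Finset.card_erase_of_mem hv, hcard]
          · intro s hs s' hs' hss
            simp only [Finset.mem_filter] at hs hs'
            rw [← Finset.insert_erase hs.2.1, hss, Finset.insert_erase hs'.2.1]
          · intro t ht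
            rw [Finset.mem_powersetCard] at ht
            have hvt : v ∉ t := fun hvt => H.irrefl ((SimpleGraph.mem_neighborFinset H v v).mp (ht.1 hvt))
            refine ⟨insert v t, ?_, ?_⟩
            · simp only [Finset.mem_filter, Finset.mem_powersetCard]
              refine ⟨⟨Finset.subset_univ _, by rw [Finset.card_insert_of_notMem hvt, ht.2]⟩,
                Finset.mem_insert_self v t, ?_⟩
              intro u hu hune
              rcases Finset.mem_insert.mp hu with rfl | hu
              · exact absurd rfl hune
              · exact (SimpleGraph.mem_neighborFinset H v u).mp (ht.1 hu)
            · rw [Finset.erase_insert hvt]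
variable {V : Type*} [DecidableEq V]

lemma ps2 {a b c : V} (hab : a ≠ b) (hac : a ≠ c) (hbc : b ≠ c) :
    ({a, b, c} : Finset V).powersetCard 2 = {{a, b}, {a, c}, {b, c}} := by
  ext p
  simp only [Finset.mem_powersetCard, Finset.mem_insert, Finset.mem_singleton,
    Finset.card_eq_two]
  constructor
  · rintro ⟨hsub, x, y, hxy, rfl⟩
    have hx := hsub (Finset.mem_insert_self x {y})
    have hy := hsub (Finset.mem_insert_of_mem (Finset.mem_singleton_self y))
    simp only [Finset.mem_insert, Finset.mem_singleton] at hx hy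
    rcases hx with rfl | rfl | rfl <;> rcases hy with rfl | rfl | rfl <;>
      first
        | exact absurd rfl hxy
        | simp [Finset.pair_comm]
  · rintro (rfl | rfl | rfl)
    · exact ⟨by intro x hx; simp at hx ⊢; tauto, a, b, hab, rfl⟩
    · exact ⟨by intro x hx; simp at hx ⊢; tauto, a, c, hac, rfl⟩
    · exact ⟨by intro x hx; simp at hx ⊢; tauto, b, c, hbc, rfl⟩

variable {V : Type*} [DecidableEq V]

lemma qpair (H : SimpleGraph V) {x y : V} (hxy : x ≠ y) :
    (¬ ∀ u ∈ ({x, y} : Finset V), ∀ v ∈ ({x, y} : Finset V), ¬ H.Adj u v) ↔ H.Adj x y := by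
  constructor
  · intro h
    push_neg at h
    obtain ⟨u, hu, v, hv, huv⟩ := h
    simp only [Finset.mem_insert, Finset.mem_singleton] at hu hv
    rcases hu with rfl | rfl <;> rcases hv with rfl | rfl
    · exact absurd huv H.irrefl
    · exact huv
    · exact huv.symm
    · exact absurd huv H.irrefl
  · intro h hall
    exact hall x (by simp) y (by simp) h

lemma indep_triple (H : SimpleGraph V) {a b c : V} (hab : a ≠ b) (hac : a ≠ c) (hbc : b ≠ c) :
    (∀ u ∈ ({a, b, c} : Finset V), ∀ v ∈ ({a, b, c} : Finset V), ¬ H.Adj u v)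
      ↔ ¬H.Adj a b ∧ ¬H.Adj a c ∧ ¬H.Adj b c := by
  constructor
  · intro h
    exact ⟨h a (by simp) b (by simp), h a (by simp) c (by simp), h b (by simp) c (by simp)⟩
  · rintro ⟨h1, h2, h3⟩ u hu v hv
    simp only [Finset.mem_insert, Finset.mem_singleton] at hu hv
    rcases hu with rfl | rfl | rfl <;> rcases hv with rfl | rfl | rfl <;>
      first
        | exact H.irrefl
        | exact h1 | exact h2 | exact h3
        | exact fun h => h1 h.symm
        | exact fun h => h2 h.symm
        | exact fun h => h3 h.symm

lemma tri_triple (H : SimpleGraph V) {a b c : V} (hab : a ≠ b) (hac : a ≠ c) (hbc : b ≠ c) :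
    (∀ u ∈ ({a, b, c} : Finset V), ∀ v ∈ ({a, b, c} : Finset V), u ≠ v → H.Adj u v)
      ↔ H.Adj a b ∧ H.Adj a c ∧ H.Adj b c := by
  constructor
  · intro h
    exact ⟨h a (by simp) b (by simp) hab, h a (by simp) c (by simp) hac,
      h b (by simp) c (by simp) hbc⟩
  · rintro ⟨h1, h2, h3⟩ u hu v hv huv
    simp only [Finset.mem_insert, Finset.mem_singleton] at hu hv
    rcases hu with rfl | rfl | rfl <;> rcases hv with rfl | rfl | rfl <;>
      first
        | exact absurd rfl huv
        | exact h1 | exact h2 | exact h3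
        | exact h1.symm | exact h2.symm | exact h3.symm

lemma pv_a (H : SimpleGraph V) {a b c : V} (hab : a ≠ b) (hac : a ≠ c) (hbc : b ≠ c) :
    (∀ u ∈ ({a, b, c} : Finset V), u ≠ a → H.Adj a u) ↔ H.Adj a b ∧ H.Adj a c := by
  constructor
  · intro h
    exact ⟨h b (by simp) (Ne.symm hab), h c (by simp) (Ne.symm hac)⟩
  · rintro ⟨h1, h2⟩ u hu hua
    simp only [Finset.mem_insert, Finset.mem_singleton] at hu
    rcases hu with rfl | rfl | rfl
    · exact absurd rfl hua
    · exact h1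
    · exact h2

lemma pv_b (H : SimpleGraph V) {a b c : V} (hab : a ≠ b) (hac : a ≠ c) (hbc : b ≠ c) :
    (∀ u ∈ ({a, b, c} : Finset V), u ≠ b → H.Adj b u) ↔ H.Adj a b ∧ H.Adj b c := by
  constructor
  · intro h
    exact ⟨(h a (by simp) hab).symm, h c (by simp) (Ne.symm hbc)⟩
  · rintro ⟨h1, h2⟩ u hu hub
    simp only [Finset.mem_insert, Finset.mem_singleton] at hu
    rcases hu with rfl | rfl | rfl
    · exact h1.symm
    · exact absurd rfl hub
    · exact h2

lemma pv_c (H : SimpleGraph V) {a b c : V} (hab : a ≠ b) (hac : a ≠ c) (hbc : b ≠ c) :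
    (∀ u ∈ ({a, b, c} : Finset V), u ≠ c → H.Adj c u) ↔ H.Adj a c ∧ H.Adj b c := by
  constructor
  · intro h
    exact ⟨(h a (by simp) hac).symm, (h b (by simp) hbc).symm⟩
  · rintro ⟨h1, h2⟩ u hu huc
    simp only [Finset.mem_insert, Finset.mem_singleton] at hu
    rcases hu with rfl | rfl | rfl
    · exact h1.symm
    · exact h2.symm
    · exact absurd rfl huc

lemma perset {V : Type*} [Fintype V] [DecidableEq V] (H : SimpleGraph V) [DecidableRel H.Adj]
    {a b c : V} (hab : a ≠ b) (hac : a ≠ c) (hbc : b ≠ c) :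
    (if (∀ u ∈ ({a, b, c} : Finset V), ∀ v ∈ ({a, b, c} : Finset V), ¬ H.Adj u v)
        then (1:ℕ) else 0)
      + (((univ : Finset V).powersetCard 2).filter
          (fun p => p ⊆ ({a, b, c} : Finset V) ∧ ¬ ∀ u ∈ p, ∀ v ∈ p, ¬ H.Adj u v)).card
      + (if (∀ u ∈ ({a, b, c} : Finset V), ∀ v ∈ ({a, b, c} : Finset V), u ≠ v → H.Adj u v)
          then (1:ℕ) else 0)
    = 1 + (({a, b, c} : Finset V).filter
          (fun v => ∀ u ∈ ({a, b, c} : Finset V), u ≠ v → H.Adj v u)).card := by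
  have hAB : ({a, b} : Finset V) ≠ {a, c} := by
    intro h
    have : (b : V) ∈ ({a, c} : Finset V) := h ▸ (by simp)
    simp only [Finset.mem_insert, Finset.mem_singleton] at this
    rcases this with rfl | rfl
    · exact hab rfl
    · exact hbc rfl
  have hAC : ({a, b} : Finset V) ≠ {b, c} := by
    intro h
    have : (a : V) ∈ ({b, c} : Finset V) := h ▸ (by simp)
    simp only [Finset.mem_insert, Finset.mem_singleton] at this
    rcases this with rfl | rfl
    · exact hab rfl
    · exact hac rfl
  have hBC : ({a, c} : Finset V) ≠ {b, c} := by
    intro h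
    have : (a : V) ∈ ({b, c} : Finset V) := h ▸ (by simp)
    simp only [Finset.mem_insert, Finset.mem_singleton] at this
    rcases this with rfl | rfl
    · exact hab rfl
    · exact hac rfl
  have hfe : ((univ : Finset V).powersetCard 2).filter
        (fun p => p ⊆ ({a, b, c} : Finset V) ∧ ¬ ∀ u ∈ p, ∀ v ∈ p, ¬ H.Adj u v)
      = (({a, b, c} : Finset V).powersetCard 2).filter
        (fun p => ¬ ∀ u ∈ p, ∀ v ∈ p, ¬ H.Adj u v) := by
    ext p
    simp only [Finset.mem_filter, Finset.mem_powersetCard, Finset.subset_univ, true_and]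
    tauto
  rw [hfe, ps2 hab hac hbc]
  rw [Finset.card_filter, Finset.card_filter]
  rw [Finset.sum_insert (by simp [hAB, hAC]), Finset.sum_insert (by simp [hBC]),
    Finset.sum_singleton]
  rw [Finset.sum_insert (by simp [hab, hac]), Finset.sum_insert (by simp [hbc]),
    Finset.sum_singleton]
  simp only [qpair H hab, qpair H hac, qpair H hbc, indep_triple H hab hac hbc,
    tri_triple H hab hac hbc, pv_a H hab hac hbc, pv_b H hab hac hbc, pv_c H hab hac hbc]
  by_cases h1 : H.Adj a b <;> by_cases h2 : H.Adj a c <;> by_cases h3 : H.Adj b c <;>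
    simp [h1, h2, h3]

noncomputable def notIndep2 {V : Type*} [Fintype V] [DecidableEq V] (H : SimpleGraph V)
    [DecidableRel H.Adj] : ℕ :=
  (((univ : Finset V).powersetCard 2).filter
    (fun p => ¬ ∀ u ∈ p, ∀ v ∈ p, ¬ H.Adj u v)).card

lemma indepCount_two_add {V : Type*} [Fintype V] [DecidableEq V] (H : SimpleGraph V)
    [DecidableRel H.Adj] :
    indepCount H 2 + notIndep2 H = (Fintype.card V).choose 2 := by
  rw [indepCount_eq, notIndep2, Finset.card_filter_add_card_filter_not,
    Finset.card_powersetCard, Finset.card_univ]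

lemma master {V : Type*} [Fintype V] [DecidableEq V] (H : SimpleGraph V)
    [DecidableRel H.Adj] :
    indepCount H 3 + notIndep2 H * (Fintype.card V - 2) + triangleCount H
      = (Fintype.card V).choose 3 + ∑ v : V, (H.degree v).choose 2 := by
  rw [indepCount_eq, triangleCount_eq, notIndep2,
    ← exchange1 (fun p => ¬ ∀ u ∈ p, ∀ v ∈ p, ¬ H.Adj u v), ← exchange2 H]
  rw [show (Fintype.card V).choose 3 = ∑ _s ∈ (univ : Finset V).powersetCard 3, (1:ℕ) by
    rw [Finset.sum_const, smul_eq_mul, mul_one, Finset.card_powersetCard, Finset.card_univ]]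
  rw [Finset.card_filter, Finset.card_filter, ← Finset.sum_add_distrib,
    ← Finset.sum_add_distrib, ← Finset.sum_add_distrib]
  refine Finset.sum_congr rfl fun s hs => ?_
  rw [Finset.mem_powersetCard] at hs
  obtain ⟨a, b, c, hab, hac, hbc, rfl⟩ := Finset.card_eq_three.mp hs.2
  exact perset H hab hac hbc

open Fin.CommRing in
lemma cycle_no_tri {m : ℕ} {a b c : Fin (m + 2 + 2)}
    (h1 : (cycleGraph (m + 2 + 2)).Adj a b) (h2 : (cycleGraph (m + 2 + 2)).Adj a c)
    (h3 : (cycleGraph (m + 2 + 2)).Adj b c) : False := by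
  rw [cycleGraph_adj] at h1 h2 h3
  have h10 : (1 : Fin (m + 2 + 2)) ≠ 0 := by
    intro h
    have := congrArg Fin.val h
    simp [Fin.val_one] at this
  have h30 : (3 : Fin (m + 2 + 2)) ≠ 0 := by
    intro h
    have := congrArg Fin.val h
    rw [show ((3 : Fin (m+2+2)) : ℕ) = 3 % (m+2+2) from rfl,
      Nat.mod_eq_of_lt (show 3 < m + 2 + 2 by omega)] at this
    simp at this
  rcases h1 with hx | hx <;> rcases h2 with hy | hy <;> rcases h3 with hz | hz <;>
    first
      | exact h10 (by linear_combination hx + hy + hz)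
      | exact h10 (by linear_combination hx + hy - hz)
      | exact h10 (by linear_combination hx - hy + hz)
      | exact h10 (by linear_combination hx - hy - hz)
      | exact h10 (by linear_combination - hx + hy + hz)
      | exact h10 (by linear_combination - hx + hy - hz)
      | exact h10 (by linear_combination - hx - hy + hz)
      | exact h10 (by linear_combination - hx - hy - hz)
      | exact h30 (by linear_combination hx + hy + hz)
      | exact h30 (by linear_combination hx + hy - hz)
      | exact h30 (by linear_combination hx - hy + hz)
      | exact h30 (by linear_combination hx - hy - hz)
      | exact h30 (by linear_combination - hx + hy + hz)
      | exact h30 (by linear_combination - hx + hy - hz)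
      | exact h30 (by linear_combination - hx - hy + hz)
      | exact h30 (by linear_combination - hx - hy - hz)


lemma cycle_tri_count {m : ℕ} : triangleCount (SimpleGraph.cycleGraph (m + 2 + 2)) = 0 := by
  have : IsEmpty {s : Finset (Fin (m + 2 + 2)) // s.card = 3 ∧
      ∀ u ∈ s, ∀ v ∈ s, u ≠ v → (SimpleGraph.cycleGraph (m + 2 + 2)).Adj u v} := by
    refine ⟨fun ⟨s, hcard, htri⟩ => ?_⟩
    obtain ⟨a, b, c, hab, hac, hbc, rfl⟩ := Finset.card_eq_three.mp hcard
    exact cycle_no_tri (htri a (by simp) b (by simp) hab) (htri a (by simp) c (by simp) hac)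
      (htri b (by simp) c (by simp) hbc)
  rw [triangleCount]
  exact Nat.card_of_isEmpty

lemma cycle_deg_sum {m : ℕ} :
    ∑ v : Fin (m + 2 + 2), ((SimpleGraph.cycleGraph (m + 2 + 2)).degree v).choose 2
      = m + 2 + 2 := by
  have hdeg : ∀ v : Fin (m + 2 + 2), (SimpleGraph.cycleGraph (m + 2 + 2)).degree v = 2 :=
    fun v => SimpleGraph.cycleGraph_degree_three_le (n := m + 1) (v := v)
  simp [hdeg]

end Aux

theorem degree_sum_of_indepEquiv_cycle {V : Type*} [Fintype V] (G : SimpleGraph V)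
    [DecidableRel G.Adj] (n : ℕ) (hn : 4 ≤ n)
    (h : ∀ k, indepCount G k = indepCount (SimpleGraph.cycleGraph n) k) :
    ∑ v : V, (G.degree v).choose 2 = n + triangleCount G := by
  classical
  obtain ⟨m, rfl⟩ : ∃ m, n = m + 2 + 2 := ⟨n - 4, by omega⟩
  set C := SimpleGraph.cycleGraph (m + 2 + 2) with hC
  have hcard : Fintype.card V = m + 2 + 2 := by
    have h1 := h 1
    rw [indepCount_one G, indepCount_one C] at h1
    simpa using h1
  have hE2 : notIndep2 G = notIndep2 C := by
    have h2 := h 2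
    have a1 := indepCount_two_add G
    have a2 := indepCount_two_add C
    rw [hcard] at a1
    rw [Fintype.card_fin] at a2
    omega
  have m1 := master G
  have m2 := master C
  rw [hcard] at m1
  rw [Fintype.card_fin] at m2
  rw [h 3, hE2] at m1
  rw [show triangleCount C = 0 from cycle_tri_count,
    show ∑ v : Fin (m+2+2), (C.degree v).choose 2 = m + 2 + 2 from cycle_deg_sum] at m2
  set P := notIndep2 C * (m + 2 + 2 - 2) with hP
  omega
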